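/- If μ is a nonzero finite positive singular Borel measure on the circle with harmonic extension u to the unit disc and harmonic conjugate ũ, then the analytic function F(z) = exp(u(z) + i ũ(z)) is unbounded on the open unit disc. -/

import Mathlib

open MeasureTheory Complex Filter AddCircle

instance : Fact (0 < 2 * Real.pi) := ⟨Real.two_pi_pos⟩

/-- The Herglotz integral of a measure `μ` on the circle `ℝ/2πℤ`:
`H(z) = ∫ (e^{it} + z)/(e^{it} - z) dμ(t)`. Its real part is the Poisson (harmonic)
extension `u` of `μ` to the disc, and its imaginary part is the harmonic conjugate `ũ`
of `u` normalized by `ũ(0) = 0`; thus `exp H = exp (u + iũ)`. -/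
noncomputable def herglotz (μ : Measure (AddCircle (2 * Real.pi))) (z : ℂ) : ℂ :=
  ∫ x, (((toCircle x : ℂ)) + z) / (((toCircle x : ℂ)) - z) ∂μ

/-!
If `‖exp H‖ ≤ C` on the disc, then `Re H ≤ C` there. The real part of the Herglotz kernel is the
Poisson kernel `(1 - ‖z‖²) / ‖w - z‖²`, which is nonnegative and at least `1 / (4r)` for `w` within
distance `r` of `ζ` and `z = (1 - r) ζ`; hence `Re H ((1 - r) ζ) ≥ μ (closedBall x r) / (4r)` with
`ζ = toCircle x`. Since `μ` is nonzero and singular, the Besicovitch differentiation theorem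
(applied on `ℝ` to the pushforward of `μ` to a fundamental interval) gives a point `x` at which
`μ (closedBall x r) / r → ∞` as `r → 0`, so `Re H` is unbounded.
-/

open Set Metric Topology
open scoped ENNReal

theorem Complex.re_add_div_sub {w : ℂ} (hw : ‖w‖ = 1) (z : ℂ) :
    ((w + z) / (w - z)).re = (1 - ‖z‖ ^ 2) / ‖w - z‖ ^ 2 := by
  have hw' : w.re * w.re + w.im * w.im = 1 := by
    rw [← normSq_apply, ← Complex.sq_norm, hw, one_pow]
  rw [div_re, ← add_div, ← Complex.sq_norm, Complex.sq_norm z, normSq_apply]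
  congr 1
  simp only [add_re, sub_re, add_im, sub_im]
  linear_combination hw'

theorem Complex.inv_four_mul_le_re_add_div_sub {w ζ : ℂ} (hw : ‖w‖ = 1) (hζ : ‖ζ‖ = 1) {r : ℝ}
    (hr0 : 0 < r) (hr1 : r ≤ 1) (hwζ : ‖w - ζ‖ ≤ r) :
    (4 * r)⁻¹ ≤ ((w + (1 - r : ℝ) * ζ) / (w - (1 - r : ℝ) * ζ)).re := by
  have hz : ‖((1 - r : ℝ) : ℂ) * ζ‖ = 1 - r := by
    rw [norm_mul, hζ, mul_one, norm_real, Real.norm_of_nonneg (by linarith)]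
  have hlower : r ≤ ‖w - (1 - r : ℝ) * ζ‖ := by
    have := norm_sub_norm_le w ((1 - r : ℝ) * ζ)
    rw [hw, hz] at this
    linarith
  have hupper : ‖w - (1 - r : ℝ) * ζ‖ ≤ 2 * r := by
    have hsplit : w - (1 - r : ℝ) * ζ = (w - ζ) + (r : ℂ) * ζ := by push_cast; ring
    calc ‖w - (1 - r : ℝ) * ζ‖ ≤ ‖w - ζ‖ + ‖(r : ℂ) * ζ‖ := hsplit ▸ norm_add_le _ _
      _ ≤ r + r := by rw [norm_mul, hζ, mul_one, norm_real, Real.norm_of_nonneg hr0.le]; linarith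
      _ = 2 * r := by ring
  rw [re_add_div_sub hw, hz, inv_eq_one_div, div_le_div_iff₀ (by positivity) (by nlinarith)]
  nlinarith [mul_le_mul hupper hupper (norm_nonneg _) (by positivity : 0 ≤ 2 * r)]

theorem Besicovitch.ae_tendsto_measure_closedBall_div_of_mutuallySingular {β : Type*}
    [MetricSpace β] [MeasurableSpace β] [BorelSpace β] [SecondCountableTopology β]
    [HasBesicovitchCovering β] [ProperSpace β] {ρ μ : Measure β} [IsLocallyFiniteMeasure ρ]
    [IsLocallyFiniteMeasure μ] [μ.IsOpenPosMeasure] (h : ρ ⟂ₘ μ) :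
    ∀ᵐ x ∂ρ, Tendsto (fun r => ρ (closedBall x r) / μ (closedBall x r)) (𝓝[>] 0) (𝓝 ∞) := by
  filter_upwards [(Besicovitch.vitaliFamily ρ).ae_eventually_measure_zero_of_singular h.symm]
    with x hx
  rw [← ENNReal.inv_zero]
  refine (tendsto_inv_iff.2 (hx.comp (Besicovitch.tendsto_filterAt ρ x))).congr' ?_
  filter_upwards [self_mem_nhdsWithin] with r hr
  exact ENNReal.inv_div (Or.inr measure_closedBall_lt_top.ne)
    (Or.inr (measure_closedBall_pos μ x hr).ne')

namespace AddCircle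

variable {T : ℝ}

theorem measure_closedBall_le_map_coe_closedBall {ν : Measure ℝ} (x : ℝ) (r : ℝ) :
    ν (closedBall x r) ≤ ν.map ((↑) : ℝ → AddCircle T) (closedBall (x : AddCircle T) r) := by
  rw [Measure.map_apply AddCircle.measurable_mk' measurableSet_closedBall]
  refine measure_mono fun y hy => ?_
  rw [mem_preimage, mem_closedBall, dist_eq_norm, ← coe_sub]
  exact (QuotientAddGroup.norm_mk_le_norm).trans (mem_closedBall.1 hy)

variable [hT : Fact (0 < T)]

theorem norm_toCircle_sub_one_le (u : AddCircle T) :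
    ‖(toCircle u : ℂ) - 1‖ ≤ 2 * Real.pi / T * ‖u‖ := by
  induction u using QuotientAddGroup.induction_on with | H x => ?_
  set a := x - round (T⁻¹ * x) * T
  have hxa : (x : AddCircle T) = a := by simp [a, coe_period]
  rw [AddCircle.norm_eq, hxa]
  calc ‖(toCircle (a : AddCircle T) : ℂ) - 1‖
      = ‖exp (I * ↑(2 * Real.pi / T * a)) - 1‖ := by
        rw [toCircle_apply_mk, Circle.coe_exp, mul_comm]
    _ ≤ ‖2 * Real.pi / T * a‖ := Real.norm_exp_I_mul_ofReal_sub_one_le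
    _ = 2 * Real.pi / T * |a| := by
        rw [Real.norm_eq_abs, abs_mul, abs_of_pos (div_pos Real.two_pi_pos hT.out)]

theorem norm_toCircle_sub_toCircle_le (s t : AddCircle T) :
    ‖(toCircle s : ℂ) - toCircle t‖ ≤ 2 * Real.pi / T * dist s t := by
  have hs : (toCircle s : ℂ) = toCircle (s - t) * toCircle t := by
    rw [← Circle.coe_mul, ← toCircle_add, sub_add_cancel]
  rw [hs, ← sub_one_mul, norm_mul, Circle.norm_coe, mul_one, dist_eq_norm]
  exact norm_toCircle_sub_one_le _

theorem measurableEmbedding_val_comp_measurableEquivIoc (a : ℝ) :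
    MeasurableEmbedding (Subtype.val ∘ measurableEquivIoc T a) :=
  (MeasurableEmbedding.subtype_coe measurableSet_Ioc).comp
    (measurableEquivIoc T a).measurableEmbedding

theorem mutuallySingular_volume_map_measurableEquivIoc {μ : Measure (AddCircle T)}
    (h : μ ⟂ₘ volume) (a : ℝ) : μ.map (Subtype.val ∘ measurableEquivIoc T a) ⟂ₘ volume := by
  set S := Ioc a (a + T)
  set g := Subtype.val ∘ measurableEquivIoc T a
  have hg : MeasurableEmbedding g := measurableEmbedding_val_comp_measurableEquivIoc a
  have hgS : g ⁻¹' S = univ := eq_univ_of_forall fun x => (measurableEquivIoc T a x).2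
  have hvol : volume.map g = volume.restrict S := by
    rw [← Measure.map_map measurable_subtype_coe (measurableEquivIoc T a).measurable]
    change (volume.map (equivIoc T a)).map Subtype.val = _
    rw [(measurePreserving_equivIoc T).map_eq, map_comap_subtype_coe measurableSet_Ioc]
  rw [← Measure.restrict_add_restrict_compl (μ := volume) (measurableSet_Ioc : MeasurableSet S)]
  refine .add_right (hvol ▸ hg.mutuallySingular_map h) (.mk (s := Sᶜ) (t := S) ?_ ?_ ?_)
  · rw [hg.map_apply, preimage_compl, hgS, compl_univ, measure_empty]
  · simp [S]
  · simp

theorem ae_tendsto_measure_closedBall_div_of_mutuallySingular {μ : Measure (AddCircle T)}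
    [IsFiniteMeasure μ] (h : μ ⟂ₘ volume) :
    ∀ᵐ x ∂μ, Tendsto (fun r => μ (closedBall x r) / volume (closedBall x r)) (𝓝[>] 0) (𝓝 ∞) := by
  set g : AddCircle T → ℝ := Subtype.val ∘ measurableEquivIoc T 0
  have hg : MeasurableEmbedding g := measurableEmbedding_val_comp_measurableEquivIoc 0
  have hgx : ∀ x, (g x : AddCircle T) = x := (equivIoc T 0).symm_apply_apply
  have hμ : (μ.map g).map ((↑) : ℝ → AddCircle T) = μ := by
    rw [Measure.map_map AddCircle.measurable_mk' hg.measurable]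
    convert Measure.map_id
    exact funext hgx
  filter_upwards [ae_of_ae_map hg.measurable.aemeasurable
    (Besicovitch.ae_tendsto_measure_closedBall_div_of_mutuallySingular
      (mutuallySingular_volume_map_measurableEquivIoc h 0))] with x hx
  refine tendsto_nhds_top_mono hx ?_
  filter_upwards [Ioo_mem_nhdsGT (half_pos hT.out)] with r hr
  have hvol : volume (closedBall x r) = volume (closedBall (g x) r) := by
    rw [Real.volume_closedBall, volume_closedBall, min_eq_right (by linarith [hr.2])]
  rw [hvol]
  gcongr
  calc μ.map g (closedBall (g x) r)
      ≤ (μ.map g).map ((↑) : ℝ → AddCircle T) (closedBall (g x : AddCircle T) r) :=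
        measure_closedBall_le_map_coe_closedBall (g x) r
    _ = μ (closedBall x r) := by rw [hμ, hgx]

theorem eventually_mul_le_measureReal_closedBall {μ : Measure (AddCircle T)} [IsFiniteMeasure μ]
    {x : AddCircle T}
    (hx : Tendsto (fun r => μ (closedBall x r) / volume (closedBall x r)) (𝓝[>] 0) (𝓝 ∞))
    (M : ℝ) : ∀ᶠ r in 𝓝[>] 0, M * r ≤ μ.real (closedBall x r) := by
  filter_upwards [hx.eventually (lt_mem_nhds (ENNReal.ofReal_lt_top (r := M / 2))),
    Ioo_mem_nhdsGT (half_pos hT.out)] with r hM hr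
  rw [volume_closedBall, min_eq_right (by linarith [hr.2]),
    ENNReal.lt_div_iff_mul_lt (Or.inl (ENNReal.ofReal_pos.2 (by linarith [hr.1])).ne')
      (Or.inl ENNReal.ofReal_ne_top), ← ENNReal.ofReal_mul' (by linarith [hr.1])] at hM
  rw [Measure.real, ← ENNReal.ofReal_le_iff_le_toReal (measure_ne_top μ _),
    show M * r = M / 2 * (2 * r) by ring]
  exact hM.le

end AddCircle

theorem norm_ofReal_one_sub_mul_lt_one (u : Circle) {r : ℝ} (hr0 : 0 < r) (hr1 : r < 1) :
    ‖((1 - r : ℝ) : ℂ) * u‖ < 1 := by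
  rw [norm_mul, Circle.norm_coe, mul_one, norm_real, Real.norm_of_nonneg (by linarith)]
  linarith

section Herglotz

variable (μ : Measure (AddCircle (2 * Real.pi))) [IsFiniteMeasure μ]

theorem integrable_herglotz_integrand {z : ℂ} (hz : ‖z‖ < 1) :
    Integrable (fun x : AddCircle (2 * Real.pi) =>
      ((toCircle x : ℂ) + z) / ((toCircle x : ℂ) - z)) μ := by
  have hne : ∀ x : AddCircle (2 * Real.pi), (toCircle x : ℂ) - z ≠ 0 := fun x h => by
    rw [sub_eq_zero] at h
    rw [← h, Circle.norm_coe] at hz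
    exact hz.false
  have hcont : Continuous fun x : AddCircle (2 * Real.pi) => (toCircle x : ℂ) :=
    continuous_subtype_val.comp continuous_toCircle
  exact ((hcont.add continuous_const).div (hcont.sub continuous_const) hne)
    |>.integrable_of_hasCompactSupport (.of_compactSpace _)

theorem measureReal_closedBall_div_le_re_herglotz (x : AddCircle (2 * Real.pi)) {r : ℝ}
    (hr0 : 0 < r) (hr1 : r < 1) :
    μ.real (closedBall x r) / (4 * r) ≤ (herglotz μ ((1 - r : ℝ) * toCircle x)).re := by
  set z : ℂ := (1 - r : ℝ) * toCircle x
  have hz : ‖z‖ < 1 := norm_ofReal_one_sub_mul_lt_one (toCircle x) hr0 hr1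
  set f := fun y : AddCircle (2 * Real.pi) => (((toCircle y : ℂ) + z) / ((toCircle y : ℂ) - z)).re
  have hf : Integrable f μ := (integrable_herglotz_integrand μ hz).re
  have hf_nonneg : ∀ y, 0 ≤ f y := fun y => by
    simp only [f, re_add_div_sub (Circle.norm_coe _)]
    have : ‖z‖ ^ 2 ≤ 1 := by nlinarith [norm_nonneg z]
    positivity
  have hf_ball : ∀ y ∈ closedBall x r, (4 * r)⁻¹ ≤ f y := fun y hy => by
    refine inv_four_mul_le_re_add_div_sub (Circle.norm_coe _) (Circle.norm_coe _) hr0 hr1.le ?_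
    calc ‖(toCircle y : ℂ) - toCircle x‖ ≤ 2 * Real.pi / (2 * Real.pi) * dist y x :=
          norm_toCircle_sub_toCircle_le y x
      _ ≤ r := by rw [div_self Real.two_pi_pos.ne', one_mul]; exact hy
  calc μ.real (closedBall x r) / (4 * r) = (4 * r)⁻¹ * μ.real (closedBall x r) := by ring
    _ ≤ ∫ y in closedBall x r, f y ∂μ :=
      setIntegral_ge_of_const_le_real measurableSet_closedBall (measure_ne_top μ _) hf_ball
        hf.integrableOn
    _ ≤ ∫ y, f y ∂μ := setIntegral_le_integral hf (.of_forall hf_nonneg)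
    _ = (herglotz μ z).re := integral_re (integrable_herglotz_integrand μ hz)

end Herglotz

/-- If `μ` is a nonzero finite positive singular Borel measure on the circle, `u` its
harmonic (Poisson) extension and `ũ` the harmonic conjugate, then the analytic function
`F = exp (u + iũ)` is unbounded on the open unit disc. -/
theorem exp_herglotz_unbounded (μ : Measure (AddCircle (2 * Real.pi))) [IsFiniteMeasure μ]
    (hne : μ ≠ 0) (hsing : μ.MutuallySingular volume) :
    ¬ ∃ C : ℝ, ∀ z ∈ Metric.ball (0 : ℂ) 1, ‖Complex.exp (herglotz μ z)‖ ≤ C := by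
  rintro ⟨C, hC⟩
  have : (ae μ).NeBot := ae_neBot.2 hne
  obtain ⟨x, hx⟩ := (AddCircle.ae_tendsto_measure_closedBall_div_of_mutuallySingular hsing).exists
  obtain ⟨r, hμr, hr0, hr1⟩ := ((AddCircle.eventually_mul_le_measureReal_closedBall hx (4 * C)).and
    (Ioo_mem_nhdsGT one_pos)).exists
  set z : ℂ := (1 - r : ℝ) * toCircle x
  have hRe : C ≤ (herglotz μ z).re :=
    calc C = 4 * C * r / (4 * r) := by field_simp
      _ ≤ μ.real (closedBall x r) / (4 * r) := by gcongr
      _ ≤ (herglotz μ z).re := measureReal_closedBall_div_le_re_herglotz μ x hr0 hr1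
  have hbound := hC z (mem_ball_zero_iff.2 (norm_ofReal_one_sub_mul_lt_one _ hr0 hr1))
  rw [norm_exp] at hbound
  linarith [Real.add_one_le_exp (herglotz μ z).re]
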